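/- Let G and H be two nontrivial connected graphs. Then κ(G □ H) = min{κ(G)·|V(H)|, κ(H)·|V(G)|, δ(G) + δ(H)}. -/

import Mathlib

open SimpleGraph

/-- An `S`-Steiner tree in `G`: a subgraph that is a tree and contains `S`. -/
def IsSteinerTree {V : Type*} (G : SimpleGraph V) (S : Set V) (T : G.Subgraph) : Prop :=
  T.coe.IsTree ∧ S ⊆ T.verts

/-- Two `S`-trees are internally disjoint: edge-disjoint and meeting exactly in `S`. -/
def IntDisjoint {V : Type*} (S : Set V) {G : SimpleGraph V} (T₁ T₂ : G.Subgraph) : Prop :=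
  T₁.verts ∩ T₂.verts = S ∧ ∀ u v, ¬ (T₁.Adj u v ∧ T₂.Adj u v)

/-- `κ(S)`: the maximum number of pairwise internally disjoint `S`-Steiner trees. -/
noncomputable def steinerConn {V : Type*} (G : SimpleGraph V) (S : Set V) : ℕ :=
  sSup {n | ∃ f : Fin n → G.Subgraph,
    (∀ i, IsSteinerTree G S (f i)) ∧ ∀ i j, i ≠ j → IntDisjoint S (f i) (f j)}

/-- The generalized `k`-connectivity `κ_k(G)`. -/
noncomputable def genConn {V : Type*} (G : SimpleGraph V) (k : ℕ) : ℕ :=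
  sInf {c | ∃ S : Set V, S.ncard = k ∧ steinerConn G S = c}

/-- `G` is `k`-connected: more than `k` vertices, and removing fewer than `k`
vertices leaves it connected. -/
def KConnected {V : Type*} (G : SimpleGraph V) (k : ℕ) : Prop :=
  k < Nat.card V ∧ ∀ s : Set V, s.Finite → s.ncard < k → (G.induce sᶜ).Connected

/-- The vertex connectivity `κ(G)`. -/
noncomputable def vconn {V : Type*} (G : SimpleGraph V) : ℕ :=
  sSup {k | KConnected G k}

/-- The lexicographic product `G ∘ H`. -/
def lexProd {V W : Type*} (G : SimpleGraph V) (H : SimpleGraph W) : SimpleGraph (V × W) where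
  Adj a b := G.Adj a.1 b.1 ∨ (a.1 = b.1 ∧ H.Adj a.2 b.2)
  symm := by
    constructor
    intro a b h
    rcases h with h | ⟨h1, h2⟩
    · exact Or.inl h.symm
    · exact Or.inr ⟨h1.symm, h2.symm⟩
  loopless := by
    constructor
    intro a h
    rcases h with h | ⟨_, h2⟩
    · exact G.loopless.irrefl _ h
    · exact H.loopless.irrefl _ h2

/-- The star `K_{1,m}` on `m + 1` vertices: center `none`, leaves `some i`. -/
def starGraph (m : ℕ) : SimpleGraph (Option (Fin m)) where
  Adj u v := u ≠ v ∧ (u = none ∨ v = none)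
  symm := by constructor; intro u v ⟨h1, h2⟩; exact ⟨h1.symm, h2.symm⟩
  loopless := by constructor; intro u ⟨h1, _⟩; exact h1 rfl

/-!
Upper bounds: the neighbourhood of a vertex of minimum degree is a cut of `G □ H`, and so is
`s × V(H)` for a cut `s` of `G` with `|s| = κ(G)`; if `G` has no such cut, then
`κ(G) = |V(G)| - 1` and the degree bound is already smaller. The bound by `κ(H)|V(G)|` follows
through `G □ H ≃ H □ G`.

Lower bound: let `S` be a cut, with sides `X` and `Y`. If `|S| < κ(H)|V(G)|`, some column
`{u} × V(H)` meets `S` in fewer than `κ(H)` vertices, so it lies in `X ∪ S` or in `Y ∪ S`; say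
`X` misses it. If `X` contains no full column, look at a vertex `(a, b)` of `X` whose column is
closest to `u`: around it `S` contains a vertex in each column `{a'} × V(H)` with `a' ~ a` and,
disjointly, one in each row `V(G) × {b'}` with `b' ~ b`, so `|S| ≥ δ(G) + δ(H)`. Otherwise `X`
contains a full column, which `Y` then misses; either `Y` gives the same bound, or `Y` contains a
full column too, and then `S` cuts every row of `G □ H`, so `|S| ≥ κ(G)|V(H)|`.
-/

namespace SimpleGraph

variable {A B : Type*} {K : SimpleGraph A}

/-- For `X ⊆ Sᶜ`: `X` is a union of components of `K - S`. -/
def Encloses (K : SimpleGraph A) (S X : Set A) : Prop :=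
  ∀ ⦃z z'⦄, z ∈ X → K.Adj z z' → z' ∈ X ∪ S

namespace Encloses

variable {S X : Set A}

lemma compl_union (hX : K.Encloses S X) : K.Encloses S (X ∪ S)ᶜ :=
  fun _ _ hz hzz' => or_iff_not_imp_right.2 fun hS h' =>
    h'.elim (fun h' => hz (hX h' hzz'.symm)) hS

lemma comap {K' : SimpleGraph B} (f : K' →g K) (hX : K.Encloses S X) :
    K'.Encloses (f ⁻¹' S) (f ⁻¹' X) :=
  fun _ _ hz h => hX hz (f.map_adj h)

lemma exists_mem_diff (hX : K.Encloses S X) {x y : A} (hxy : K.Reachable x y) (hx : x ∈ X)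
    (hy : y ∉ X) : ∃ z ∈ S, z ∉ X := by
  obtain ⟨p⟩ := hxy
  obtain ⟨d, -, hd, hd'⟩ := p.exists_boundary_dart X hx hy
  exact ⟨d.snd, (hX hd d.adj).resolve_left hd', hd'⟩

lemma mem_of_reachable (hX : K.Encloses S X) {x y : ↥Sᶜ} (hxy : (K.induce Sᶜ).Reachable x y)
    (hx : x.1 ∈ X) : y.1 ∈ X := by
  by_contra hy
  obtain ⟨z, hzS, -⟩ := (hX.comap (Embedding.induce Sᶜ).toHom).exists_mem_diff hxy hx hy
  exact z.2 hzS

lemma preimage_fst {H : SimpleGraph B} (hX : K.Encloses S X) :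
    (K □ H).Encloses (Prod.fst ⁻¹' S) (Prod.fst ⁻¹' X) := by
  rintro z z' hz (⟨h, -⟩ | ⟨-, h⟩)
  · exact hX hz h
  · exact Or.inl (by rw [Set.mem_preimage, ← h]; exact hz)

end Encloses

lemma exists_encloses_of_not_connected {S : Set A} (hS : Sᶜ.Nonempty)
    (h : ¬ (K.induce Sᶜ).Connected) :
    ∃ X x y, K.Encloses S X ∧ Disjoint X S ∧ x ∈ X ∧ y ∉ X ∪ S := by
  have : Nonempty ↥Sᶜ := hS.to_subtype
  obtain ⟨x, y, hxy⟩ : ∃ x y : ↥Sᶜ, ¬ (K.induce Sᶜ).Reachable x y := by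
    by_contra! h'
    exact h ⟨h'⟩
  refine ⟨{z | ∃ hz : z ∈ Sᶜ, (K.induce Sᶜ).Reachable x ⟨z, hz⟩}, x, y, ?_, ?_, ⟨x.2, .rfl⟩, ?_⟩
  · rintro z z' ⟨hz, hxz⟩ hzz'
    by_cases hz' : z' ∈ S
    · exact Or.inr hz'
    · exact Or.inl ⟨hz', hxz.trans (Adj.reachable (by simpa using hzz'))⟩
  · exact Set.disjoint_left.2 fun z ⟨hz, _⟩ => hz
  · rintro (⟨_, hy⟩ | hy)
    exacts [hxy hy, y.2 hy]

lemma ncard_neighborSet_eq_degree (v : A) [Fintype (K.neighborSet v)] :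
    (K.neighborSet v).ncard = K.degree v := by
  rw [← card_neighborSet_eq_degree, ← Nat.card_eq_fintype_card, Nat.card_coe_set_eq]

lemma Reachable.exists_adj_dist_lt {G : SimpleGraph A} {a u : A} (h : G.Reachable a u)
    (hne : a ≠ u) : ∃ a₁, G.Adj a a₁ ∧ G.dist a₁ u < G.dist a u := by
  obtain ⟨p, hp⟩ := h.exists_walk_length_eq_dist
  cases p with
  | nil => exact absurd rfl hne
  | cons hadj q =>
    refine ⟨_, hadj, (dist_le q).trans_lt ?_⟩
    rw [← hp, Walk.length_cons]
    exact Nat.lt_succ_self _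

end SimpleGraph

section Connectivity

variable {A B : Type*} {K : SimpleGraph A}

lemma bddAbove_setOf_kConnected : BddAbove {k | KConnected K k} :=
  ⟨Nat.card A, fun _ hk => hk.1.le⟩

lemma le_vconn {k : ℕ} (h : KConnected K k) : k ≤ vconn K :=
  le_csSup bddAbove_setOf_kConnected h

lemma kConnected_vconn [Finite A] [Nonempty A] : KConnected K (vconn K) :=
  Nat.sSup_mem ⟨0, (⟨Nat.card_pos, fun _ _ h => absurd h (Nat.not_lt_zero _)⟩ : KConnected K 0)⟩
    bddAbove_setOf_kConnected

lemma vconn_lt_card [Finite A] [Nonempty A] : vconn K < Nat.card A :=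
  kConnected_vconn.1

lemma KConnected.of_iso {K' : SimpleGraph B} (e : K ≃g K') {k : ℕ} (h : KConnected K k) :
    KConnected K' k := by
  refine ⟨Nat.card_congr e.toEquiv ▸ h.1, fun s hs hsk => ?_⟩
  have hcard : (e ⁻¹' s).ncard = s.ncard :=
    Set.ncard_preimage_of_injective_subset_range e.injective (by simp)
  let f : K.induce (e ⁻¹' s)ᶜ →g K'.induce sᶜ :=
    ⟨fun v => ⟨e v, v.2⟩, fun hvw => by simpa using e.map_adj_iff.2 hvw⟩
  exact (h.2 _ (hs.preimage e.injective.injOn) (hcard ▸ hsk)).map f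
    fun v => ⟨⟨e.symm v, by
      simpa only [Set.mem_compl_iff, Set.mem_preimage, e.apply_symm_apply] using v.2⟩, by simp [f]⟩

lemma SimpleGraph.Iso.vconn_eq {K' : SimpleGraph B} (e : K ≃g K') : vconn K = vconn K' := by
  unfold vconn
  congr 1
  ext k
  exact ⟨.of_iso e, .of_iso e.symm⟩

lemma vconn_le_ncard [Finite A] {S X : Set A} (hX : K.Encloses S X) (hXS : Disjoint X S)
    {x y : A} (hx : x ∈ X) (hy : y ∉ X ∪ S) : vconn K ≤ S.ncard := by
  have : Nonempty A := ⟨x⟩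
  by_contra! hS
  have hconn := kConnected_vconn.2 S S.toFinite hS
  exact hy (Or.inl (hX.mem_of_reachable
    (hconn.preconnected ⟨x, hXS.notMem_of_mem_left hx⟩ ⟨y, fun h => hy (Or.inr h)⟩) hx))

lemma vconn_le_minDegree [Fintype A] [DecidableRel K.Adj] [Nonempty A] :
    vconn K ≤ K.minDegree := by
  classical
  obtain ⟨z, hz⟩ := K.exists_minimal_degree_vertex
  rw [hz]
  by_cases h : ∃ z', z' ≠ z ∧ ¬ K.Adj z z'
  · obtain ⟨z', hne, hnadj⟩ := h
    calc vconn K ≤ (K.neighborSet z).ncard :=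
          vconn_le_ncard (X := {z}) (fun _ _ h h' => Or.inr (h ▸ h'))
            (by simp) rfl (y := z') (by simp [hne, hnadj])
      _ = K.degree z := K.ncard_neighborSet_eq_degree z
  · push Not at h
    have huniv : (Finset.univ : Finset A) ⊆ insert z (K.neighborFinset z) := fun z' _ => by
      rcases eq_or_ne z' z with rfl | hne
      exacts [Finset.mem_insert_self _ _, Finset.mem_insert_of_mem (by simpa using h z' hne)]
    have hcard := (Finset.card_le_card huniv).trans (Finset.card_insert_le _ _)
    rw [Finset.card_univ, card_neighborFinset_eq_degree] at hcard
    have := vconn_lt_card (K := K)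
    rw [Nat.card_eq_fintype_card] at this
    omega

end Connectivity

section BoxProd

variable {V W : Type*} [Fintype V] [Fintype W] {G : SimpleGraph V} {H : SimpleGraph W}

lemma Set.ncard_eq_sum_ncard_column (S : Set (V × W)) :
    S.ncard = ∑ u, {w | (u, w) ∈ S}.ncard := by
  classical
  simp only [Set.ncard_eq_toFinset_card', Set.toFinset_ofPred, Finset.card_filter]
  rw [← Fintype.sum_prod_type']
  simp

lemma Set.ncard_eq_sum_ncard_row (S : Set (V × W)) :
    S.ncard = ∑ w, {u | (u, w) ∈ S}.ncard := by
  classical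
  simp only [Set.ncard_eq_toFinset_card', Set.toFinset_ofPred, Finset.card_filter]
  rw [← Fintype.sum_prod_type_right']
  simp

lemma vconn_boxProd_le_minDegree_add [DecidableRel G.Adj] [DecidableRel H.Adj] [Nonempty V]
    [Nonempty W] : vconn (G □ H) ≤ G.minDegree + H.minDegree := by
  classical
  obtain ⟨a, ha⟩ := G.exists_minimal_degree_vertex
  obtain ⟨b, hb⟩ := H.exists_minimal_degree_vertex
  refine vconn_le_minDegree.trans (((G □ H).minDegree_le_degree (a, b)).trans_eq ?_)
  rw [degree_boxProd, ha, hb]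

lemma vconn_boxProd_le_vconn_mul_card [DecidableRel G.Adj] [DecidableRel H.Adj] [Nonempty W]
    (hV : 2 ≤ Fintype.card V) : vconn (G □ H) ≤ vconn G * Fintype.card W := by
  have : Nonempty V := Fintype.card_pos_iff.1 (by omega)
  rcases lt_or_ge (vconn G + 1) (Fintype.card V) with hG | hG
  · obtain ⟨s, -, hs, hsc⟩ : ∃ s : Set V, s.Finite ∧ s.ncard < vconn G + 1 ∧
        ¬ (G.induce sᶜ).Connected := by
      by_contra! h
      exact (le_vconn (K := G) ⟨by rwa [Nat.card_eq_fintype_card], h⟩).not_gt (lt_add_one _)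
    have hsV : sᶜ.Nonempty := Set.nonempty_compl.2 fun h => by
      rw [h, Set.ncard_univ, Nat.card_eq_fintype_card] at hs
      omega
    obtain ⟨X, x, y, hX, hXS, hx, hy⟩ := exists_encloses_of_not_connected hsV hsc
    let w : W := Classical.arbitrary W
    calc vconn (G □ H) ≤ (Prod.fst ⁻¹' s : Set (V × W)).ncard :=
          vconn_le_ncard (x := (x, w)) (y := (y, w)) (hX.preimage_fst (H := H))
            (hXS.preimage _) hx hy
      _ = s.ncard * Fintype.card W := by
          rw [← Set.prod_univ, Set.ncard_prod, Set.ncard_univ, Nat.card_eq_fintype_card]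
      _ ≤ vconn G * Fintype.card W := Nat.mul_le_mul_right _ (by omega)
  · have hGV := vconn_lt_card (K := G)
    rw [Nat.card_eq_fintype_card] at hGV
    calc vconn (G □ H) ≤ G.minDegree + H.minDegree := vconn_boxProd_le_minDegree_add
      _ ≤ (Fintype.card V - 1) + (Fintype.card W - 1) :=
          add_le_add (Nat.le_sub_one_of_lt G.minDegree_lt_card)
            (Nat.le_sub_one_of_lt H.minDegree_lt_card)
      _ ≤ (Fintype.card V - 1) * Fintype.card W := by
          obtain ⟨a, ha⟩ := Nat.exists_eq_add_of_le hV
          obtain ⟨b, hb⟩ := Nat.exists_eq_add_of_le (Fintype.card_pos (α := W))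
          rw [ha, hb, Nat.add_sub_cancel_left, show 2 + a - 1 = a + 1 by omega]
          nlinarith
      _ = vconn G * Fintype.card W := by rw [show vconn G = Fintype.card V - 1 by omega]

end BoxProd

section LowerBound

variable {V W : Type*} [Fintype V] [Fintype W] {G : SimpleGraph V} {H : SimpleGraph W}
  [DecidableRel G.Adj] [DecidableRel H.Adj]

lemma minDegree_add_minDegree_le_ncard (hG : G.Connected) (hH : H.Connected)
    {S X : Set (V × W)} (hX : (G □ H).Encloses S X) {x : V × W} (hx : x ∈ X) {u : V}
    (hu : ∀ w, (u, w) ∉ X) (hcol : ∀ a, ∃ w, (a, w) ∉ X) :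
    G.minDegree + H.minDegree ≤ S.ncard := by
  obtain ⟨⟨a, b⟩, hab, hmin⟩ := X.exists_min_image (fun p => G.dist p.1 u) X.toFinite ⟨x, hx⟩
  obtain ⟨a₁, haa₁, hdist⟩ := (hG a u).exists_adj_dist_lt fun h => hu b (h ▸ hab)
  have ha₁ : ∀ w, (a₁, w) ∉ X := fun w h => (hmin _ h).not_gt hdist
  set R := S ∩ ({a, a₁} ×ˢ H.neighborSet b)
  set C := S ∩ ((G.neighborSet a \ {a₁}) ×ˢ Set.univ ∪ {(a₁, b)})
  have hR : H.neighborSet b ⊆ Prod.snd '' R := by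
    intro b' hb'
    rcases hX hab (boxProd_adj_right.2 hb') with h | h
    · have h₁ := (hX h (boxProd_adj_left.2 haa₁)).resolve_left (ha₁ b')
      exact ⟨(a₁, b'), ⟨h₁, by simp, hb'⟩, rfl⟩
    · exact ⟨(a, b'), ⟨h, by simp, hb'⟩, rfl⟩
  have hC : G.neighborSet a ⊆ Prod.fst '' C := by
    intro a' ha'
    rcases eq_or_ne a' a₁ with rfl | hne
    · exact ⟨(a', b), ⟨(hX hab (boxProd_adj_left.2 ha')).resolve_left (ha₁ b), Or.inr rfl⟩, rfl⟩
    obtain ⟨w, hw⟩ : ∃ w, (a', w) ∈ S := by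
      rcases hX hab (boxProd_adj_left.2 ha') with h | h
      · obtain ⟨w', hw'⟩ := hcol a'
        obtain ⟨w, hw, -⟩ :=
          (hX.comap (G.boxProdRight H a').toHom).exists_mem_diff (hH b w') h hw'
        exact ⟨w, hw⟩
      · exact ⟨b, h⟩
    exact ⟨(a', w), ⟨hw, Or.inl ⟨⟨ha', hne⟩, trivial⟩⟩, rfl⟩
  have hRC : Disjoint R C := by
    rw [Set.disjoint_left]
    rintro ⟨a', b'⟩ ⟨-, ha', hb'⟩ ⟨-, ⟨⟨ha'', hne⟩, -⟩ | h⟩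
    · rcases ha' with rfl | rfl
      exacts [G.loopless.irrefl _ ha'', hne rfl]
    · simp only [Set.mem_singleton_iff, Prod.mk.injEq] at h
      exact H.loopless.irrefl _ (h.2 ▸ hb')
  calc G.minDegree + H.minDegree ≤ G.degree a + H.degree b :=
        add_le_add (G.minDegree_le_degree a) (H.minDegree_le_degree b)
    _ = (G.neighborSet a).ncard + (H.neighborSet b).ncard := by
        rw [ncard_neighborSet_eq_degree, ncard_neighborSet_eq_degree]
    _ ≤ C.ncard + R.ncard :=
        add_le_add ((Set.ncard_le_ncard hC).trans Set.ncard_image_le)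
          ((Set.ncard_le_ncard hR).trans Set.ncard_image_le)
    _ = (C ∪ R).ncard := (Set.ncard_union_eq hRC.symm).symm
    _ ≤ S.ncard :=
        Set.ncard_le_ncard (Set.union_subset Set.inter_subset_left Set.inter_subset_left)

lemma min_le_ncard_of_forall_notMem_column (hG : G.Connected) (hH : H.Connected)
    {S X : Set (V × W)} (hX : (G □ H).Encloses S X) (hXS : Disjoint X S) {x y : V × W}
    (hx : x ∈ X) (hy : y ∉ X ∪ S) {u : V} (hu : ∀ w, (u, w) ∉ X) :
    min (vconn G * Fintype.card W) (G.minDegree + H.minDegree) ≤ S.ncard := by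
  by_cases hXcol : ∀ a, ∃ w, (a, w) ∉ X
  · exact min_le_of_right_le (minDegree_add_minDegree_le_ncard hG hH hX hx hu hXcol)
  obtain ⟨c, hc⟩ : ∃ c, ∀ w, (c, w) ∈ X := by simpa using hXcol
  by_cases hYcol : ∀ a, ∃ w, (a, w) ∉ (X ∪ S)ᶜ
  · exact min_le_of_right_le (minDegree_add_minDegree_le_ncard hG hH hX.compl_union hy
      (fun w h => h (Or.inl (hc w))) hYcol)
  obtain ⟨c', hc'⟩ : ∃ c', ∀ w, (c', w) ∉ X ∪ S := by simpa using hYcol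
  refine min_le_of_left_le ?_
  rw [S.ncard_eq_sum_ncard_row, mul_comm, ← smul_eq_mul, ← Finset.card_univ, ← Finset.sum_const]
  exact Finset.sum_le_sum fun w _ =>
    vconn_le_ncard (hX.comap (G.boxProdLeft H w).toHom) (hXS.preimage _) (hc w) (hc' w)

lemma min_le_ncard_of_encloses (hG : G.Connected) (hH : H.Connected)
    {S X : Set (V × W)} (hX : (G □ H).Encloses S X) (hXS : Disjoint X S) {x y : V × W}
    (hx : x ∈ X) (hy : y ∉ X ∪ S) :
    min (min (vconn G * Fintype.card W) (vconn H * Fintype.card V))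
      (G.minDegree + H.minDegree) ≤ S.ncard := by
  rcases le_or_gt (vconn H * Fintype.card V) S.ncard with hS | hS
  · exact min_le_of_left_le (min_le_of_right_le hS)
  obtain ⟨u, -, hu⟩ : ∃ u ∈ Finset.univ, {w | (u, w) ∈ S}.ncard < vconn H := by
    rw [S.ncard_eq_sum_ncard_column, mul_comm, ← smul_eq_mul, ← Finset.card_univ,
      ← Finset.sum_const] at hS
    exact Finset.exists_lt_of_sum_lt hS
  suffices min (vconn G * Fintype.card W) (G.minDegree + H.minDegree) ≤ S.ncard by omega
  by_cases hXu : ∀ w, (u, w) ∉ X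
  · exact min_le_ncard_of_forall_notMem_column hG hH hX hXS hx hy hXu
  obtain ⟨w₀, hw₀⟩ : ∃ w₀, (u, w₀) ∈ X := by simpa using hXu
  -- column `u` lies in `X ∪ S`, as `S` meets it in fewer than `κ(H)` vertices
  refine min_le_ncard_of_forall_notMem_column hG hH hX.compl_union
    (disjoint_compl_left.mono_right Set.subset_union_right) hy
    (fun h => h.elim (· (Or.inl hx)) (hXS.notMem_of_mem_left hx)) (u := u)
    fun w hw => hu.not_ge ?_
  exact vconn_le_ncard (hX.comap (G.boxProdRight H u).toHom) (hXS.preimage _) hw₀ hw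

end LowerBound

/-- Špacapan: `κ(G □ H) = min{κ(G)|V(H)|, κ(H)|V(G)|, δ(G)+δ(H)}` for nontrivial
connected graphs. -/
theorem vconn_boxProd_eq {V W : Type*} [Fintype V] [Fintype W]
    (G : SimpleGraph V) (H : SimpleGraph W) [DecidableRel G.Adj] [DecidableRel H.Adj]
    (hG : G.Connected) (hH : H.Connected)
    (hVn : 2 ≤ Fintype.card V) (hWn : 2 ≤ Fintype.card W) :
    vconn (G □ H) =
      min (min (vconn G * Fintype.card W) (vconn H * Fintype.card V))
        (G.minDegree + H.minDegree) := by
  have : Nonempty V := Fintype.card_pos_iff.1 (by omega)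
  have : Nonempty W := Fintype.card_pos_iff.1 (by omega)
  have hcard : min (min (vconn G * Fintype.card W) (vconn H * Fintype.card V))
      (G.minDegree + H.minDegree) < Nat.card (V × W) :=
    calc _ ≤ vconn G * Fintype.card W := (min_le_left _ _).trans (min_le_left _ _)
      _ < Nat.card V * Fintype.card W :=
          Nat.mul_lt_mul_of_pos_right vconn_lt_card Fintype.card_pos
      _ = Nat.card (V × W) := by simp
  refine le_antisymm (le_min (le_min (vconn_boxProd_le_vconn_mul_card hVn) ?_)
    vconn_boxProd_le_minDegree_add) (le_vconn ⟨hcard, fun S _ hS => ?_⟩)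
  · rw [(boxProdComm G H).vconn_eq]
    exact vconn_boxProd_le_vconn_mul_card hWn
  by_contra hdisc
  have hSc : Sᶜ.Nonempty := Set.nonempty_compl.2 fun h => by
    rw [h, Set.ncard_univ] at hS
    omega
  obtain ⟨X, x, y, hX, hXS, hx, hy⟩ := exists_encloses_of_not_connected hSc hdisc
  exact hS.not_ge (min_le_ncard_of_encloses hG hH hX hXS hx hy)
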